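/- Assume that Ω^1_{R/K} is a free R-module with basis dx^1,…,dx^d for elements x^1,…,x^d ∈ R. Then the R-algebra homomorphism from the polynomial R-algebra on variables X^a_i, indexed by pairs (a, i) with 1 ≤ a ≤ d and i a multi-index of length |i| ≥ 1, to R^𝐝, sending the variable X^a_i to the generator (x^a)_i, is an isomorphism (bijective). -/

import Mathlib

namespace Paper

/-- Multi-indices: finitely supported functions `Fin d → ℕ`. -/
abbrev MIdx (d : ℕ) := Fin d →₀ ℕ

/-- The length `|i|` of a multi-index. -/
def deg {d : ℕ} (i : MIdx d) : ℕ := i.sum fun _ n => n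

variable (K R : Type) [Field K] [CharZero K] [CommRing R] [Algebra K R]

/-- The defining relations of the algebra `R^𝐝`. -/
def relSet (d : ℕ) : Set (MvPolynomial (R × MIdx d) R) :=
  {p | (∃ f g : R, ∃ i : MIdx d,
          p = MvPolynomial.X (f + g, i) - MvPolynomial.X (f, i) - MvPolynomial.X (g, i)) ∨
       (∃ f g : R, ∃ i : MIdx d,
          p = MvPolynomial.X (f * g, i) -
            ∑ q ∈ Finset.HasAntidiagonal.antidiagonal i, MvPolynomial.X (f, q.1) * MvPolynomial.X (g, q.2)) ∨
       (∃ f : R, p = MvPolynomial.X (f, (0 : MIdx d)) - MvPolynomial.C f) ∨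
       (∃ (c : K) (i : MIdx d), 1 ≤ deg i ∧ p = MvPolynomial.X (algebraMap K R c, i))}

/-- The commutative `R`-algebra `R^𝐝` generated by the symbols `f_i`. -/
def Rd (d : ℕ) : Type :=
  MvPolynomial (R × MIdx d) R ⧸ Ideal.span (relSet K R d)

noncomputable instance (d : ℕ) : CommRing (Rd K R d) := Ideal.Quotient.commRing _
noncomputable instance (d : ℕ) : Algebra R (Rd K R d) := Ideal.Quotient.algebra R
noncomputable instance (d : ℕ) : Algebra K (Rd K R d) := Ideal.Quotient.algebra K

/-- The generator `f_i` of `R^𝐝`. -/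
noncomputable def gen {d : ℕ} (f : R) (i : MIdx d) : Rd K R d :=
  Ideal.Quotient.mk (Ideal.span (relSet K R d)) (MvPolynomial.X (f, i))

/-- The Taylor series `I(f) = Σ_i f_i t^i ∈ R^𝐝[[t^1,…,t^d]]`. -/
noncomputable def Ifun {d : ℕ} (f : R) : MvPowerSeries (Fin d) (Rd K R d) :=
  fun i => gen K R f i

end Paper

/-!
Let `∂ₐ` be the derivations of `R` dual to the basis `dxᵃ`, let `P` be the polynomial ring on the
`X^a_i` and `ξₐ = ∑_{|i| ≥ 1} X^a_i tⁱ ∈ P[[t]]`. The derivation `𝔇 = ∑ₐ ξₐ ∂ₐ` of `P[[t]]`, with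
`∂ₐ` acting on the coefficients taken from `R`, raises the `t`-order, so `exp 𝔇` is a ring map
`R → P[[t]]`; it sends `xᵃ` to `xᵃ + ξₐ` and kills `K`. Its coefficients therefore satisfy the
relations of `R^𝐝` and define an `R`-algebra map `R^𝐝 → P` that is left inverse to
`X^a_i ↦ (xᵃ)_i`. It is also a right inverse: by induction on `|i|`, the difference between `f_i`
and the image of the `i`-th coefficient of `exp 𝔇 f` is a `K`-derivation in `f` that vanishes on
every `xᵃ`, hence vanishes because the `dxᵃ` span `Ω¹_{R/K}`.
-/

open Finset

namespace Derivation

section Iterate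

variable {K A : Type*} [CommRing K] [CommRing A] [Algebra K A]

theorem iterate_apply_mul (D : Derivation K A A) (n : ℕ) (u v : A) :
    D^[n] (u * v) = ∑ p ∈ antidiagonal n, n.choose p.1 • (D^[p.1] u * D^[p.2] v) := by
  induction n with
  | zero => simp
  | succ n ih =>
    rw [sum_antidiagonal_choose_succ_nsmul (fun i j => D^[i] u * D^[j] v) n]
    simp only [Function.iterate_succ_apply', ih, map_sum, map_nsmul, leibniz, smul_eq_mul,
      smul_add, sum_add_distrib]
    congr 1
    refine sum_congr rfl fun p hp => ?_
    rw [← n.choose_symm_of_eq_add (mem_antidiagonal.1 hp).symm, mul_comm]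

theorem inv_factorial_smul_iterate_apply_mul {K : Type*} [Field K] [CharZero K] [Algebra K A]
    (D : Derivation K A A) (n : ℕ) (u v : A) :
    (n.factorial : K)⁻¹ • D^[n] (u * v) = ∑ p ∈ antidiagonal n,
      ((p.1.factorial : K)⁻¹ • D^[p.1] u) * ((p.2.factorial : K)⁻¹ • D^[p.2] v) := by
  rw [iterate_apply_mul, smul_sum]
  refine sum_congr rfl fun ⟨j, k⟩ hp => ?_
  obtain rfl : n = j + k := (mem_antidiagonal.1 hp).symm
  rw [← Nat.cast_smul_eq_nsmul K, smul_smul, smul_mul_smul_comm,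
    Nat.cast_choose K (Nat.le_add_right j k), Nat.add_sub_cancel_left]
  congr 1
  have : ((j + k).factorial : K) ≠ 0 := Nat.cast_ne_zero.mpr (Nat.factorial_ne_zero _)
  field_simp

end Iterate

section MapCoeffs

variable {K A : Type*} [CommRing K] [CommRing A] [Algebra K A] {σ : Type*}

theorem apply_sum_antidiagonal_mul [DecidableEq σ] (δ : Derivation K A A) (m : σ →₀ ℕ)
    (f g : (σ →₀ ℕ) → A) :
    δ (∑ p ∈ antidiagonal m, f p.1 * g p.2) =
      ∑ p ∈ antidiagonal m, f p.1 * δ (g p.2) + ∑ p ∈ antidiagonal m, g p.1 * δ (f p.2) := by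
  rw [Finsupp.sum_antidiagonal_swap m fun a b => g a * δ (f b), map_sum, ← sum_add_distrib]
  exact sum_congr rfl fun p _ => by rw [leibniz, smul_eq_mul, smul_eq_mul]

noncomputable def mvPolynomialMapCoeffs (δ : Derivation K A A) :
    Derivation K (MvPolynomial σ A) (MvPolynomial σ A) :=
  Derivation.mk' ((AddMonoidAlgebra.coeffLinearEquiv K).symm.toLinearMap ∘ₗ
      Finsupp.mapRange.linearMap δ.toLinearMap ∘ₗ (AddMonoidAlgebra.coeffLinearEquiv K).toLinearMap)
    fun p q => by
      classical
      ext m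
      change δ ((p * q).coeff m) = _
      rw [MvPolynomial.coeff_add, smul_eq_mul, smul_eq_mul, MvPolynomial.coeff_mul,
        MvPolynomial.coeff_mul, MvPolynomial.coeff_mul]
      exact apply_sum_antidiagonal_mul δ m _ _

noncomputable def mvPowerSeriesMapCoeffs (δ : Derivation K A A) :
    Derivation K (MvPowerSeries σ A) (MvPowerSeries σ A) :=
  Derivation.mk' (LinearMap.compLeft δ.toLinearMap (σ →₀ ℕ)) fun u v => by
    classical
    ext m
    change δ (MvPowerSeries.coeff m (u * v)) = _
    rw [map_add, smul_eq_mul, smul_eq_mul, MvPowerSeries.coeff_mul, MvPowerSeries.coeff_mul,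
      MvPowerSeries.coeff_mul]
    exact apply_sum_antidiagonal_mul δ m _ _

end MapCoeffs

end Derivation

theorem MvPowerSeries.le_order_sum {σ R ι : Type*} [Semiring R] (s : Finset ι)
    (f : ι → MvPowerSeries σ R) {n : ℕ∞} (h : ∀ i ∈ s, n ≤ (f i).order) :
    n ≤ (∑ i ∈ s, f i).order := by
  classical
  induction s using Finset.induction_on with
  | empty => simp
  | insert a s ha ih =>
    rw [sum_insert ha]
    exact (le_min (h a (mem_insert_self a s)) (ih fun i hi => h i (mem_insert_of_mem hi))).trans
      MvPowerSeries.min_order_le_add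

theorem Finset.sum_range_sum_antidiagonal_eq_sum_range_sum_range {M : Type*} [AddCommMonoid M]
    (N : ℕ) (c : ℕ → ℕ → M) (hc : ∀ j k, N ≤ j + k → c j k = 0) :
    ∑ n ∈ range N, ∑ p ∈ antidiagonal n, c p.1 p.2 = ∑ j ∈ range N, ∑ k ∈ range N, c j k := by
  simp only [Nat.sum_antidiagonal_eq_sum_range_succ c, sum_range_diag_flip]
  refine sum_congr rfl fun j _ => sum_subset (range_subset_range.2 (Nat.sub_le N j)) ?_
  intro k _ hk
  exact hc j k (by simp only [mem_range] at hk; omega)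

theorem Finset.sum_antidiagonal_sub_sum_antidiagonal {A M : Type*} [AddMonoid A] [HasAntidiagonal A]
    [DecidableEq A] [AddCommGroup M] {i : A} (hi : i ≠ 0) (F G : A → A → M)
    (h : ∀ p ∈ antidiagonal i, p.1 ≠ 0 → p.2 ≠ 0 → F p.1 p.2 = G p.1 p.2) :
    ∑ p ∈ antidiagonal i, F p.1 p.2 - ∑ p ∈ antidiagonal i, G p.1 p.2 =
      (F 0 i - G 0 i) + (F i 0 - G i 0) := by
  have hne : ((0 : A), i) ≠ (i, 0) := fun h => hi (congrArg Prod.fst h).symm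
  rw [← sum_sub_distrib, ← sum_pair (f := fun p : A × A => F p.1 p.2 - G p.1 p.2) hne]
  refine (sum_subset (by simp [insert_subset_iff]) fun p hp hnot => sub_eq_zero.2 ?_).symm
  have hsum := mem_antidiagonal.1 hp
  refine h p hp (fun h1 => hnot ?_) (fun h2 => hnot ?_)
  · rw [h1, zero_add] at hsum
    simp [Prod.ext_iff, h1, hsum]
  · rw [h2, add_zero] at hsum
    simp [Prod.ext_iff, h2, hsum]

section Kaehler

variable {K R ι : Type*} [CommRing K] [CommRing R] [Algebra K R]

noncomputable def coordDerivation (b : Module.Basis ι R (KaehlerDifferential K R)) (a : ι) :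
    Derivation K R R :=
  (b.coord a).compDer (KaehlerDifferential.D K R)

theorem coordDerivation_apply_of_basis (x : ι → R) (b : Module.Basis ι R (KaehlerDifferential K R))
    (hb : ∀ a, b a = KaehlerDifferential.D K R (x a)) (a c : ι) :
    coordDerivation b a (x c) = Finsupp.single c 1 a := by
  change b.coord a (KaehlerDifferential.D K R (x c)) = _
  rw [← hb, Module.Basis.coord_apply, b.repr_self]

theorem Derivation.eq_zero_of_basis {M : Type*} [AddCommGroup M] [Module R M] [Module K M]
    [IsScalarTower K R M] (x : ι → R) (b : Module.Basis ι R (KaehlerDifferential K R))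
    (hb : ∀ a, b a = KaehlerDifferential.D K R (x a)) (δ : Derivation K R M)
    (hδ : ∀ a, δ (x a) = 0) : δ = 0 := by
  have hlift : δ.liftKaehlerDifferential = 0 :=
    b.ext fun a => by rw [hb, δ.liftKaehlerDifferential_comp_D, hδ, LinearMap.zero_apply]
  ext f
  rw [← δ.liftKaehlerDifferential_comp_D, hlift]
  rfl

theorem AddMonoidHom.eq_zero_of_leibniz_of_basis {S : Type*} [CommRing S] [Algebra R S]
    [Algebra K S] [IsScalarTower K R S] (x : ι → R) (b : Module.Basis ι R (KaehlerDifferential K R))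
    (hb : ∀ a, b a = KaehlerDifferential.D K R (x a)) (δ : R →+ S)
    (halg : ∀ c : K, δ (algebraMap K R c) = 0) (hmul : ∀ f g, δ (f * g) = f • δ g + g • δ f)
    (hx : ∀ a, δ (x a) = 0) : δ = 0 := by
  let D : Derivation K R S := Derivation.mk'
    { δ with
      map_smul' := fun c f => by
        change δ (c • f) = c • δ f
        rw [Algebra.smul_def, hmul, halg, smul_zero, add_zero, algebraMap_smul] }
    hmul
  ext f
  exact congrArg (fun D : Derivation K R S => D f) (D.eq_zero_of_basis x b hb hx)

end Kaehler

namespace Paper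

open MvPowerSeries

theorem deg_eq_degree {d : ℕ} (i : MIdx d) : deg i = i.degree := rfl

theorem deg_add {d : ℕ} (i j : MIdx d) : deg (i + j) = deg i + deg j :=
  map_add Finsupp.degree i j

theorem one_le_deg_iff {d : ℕ} {i : MIdx d} : 1 ≤ deg i ↔ i ≠ 0 := by
  rw [Nat.one_le_iff_ne_zero, Ne, deg_eq_degree, Finsupp.degree_eq_zero_iff]

variable (R : Type) [CommRing R] (d : ℕ)

abbrev JetVar : Type := {p : Fin d × MIdx d // 1 ≤ deg p.2}

abbrev JetPoly : Type := MvPolynomial (JetVar d) R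

abbrev JetSeries : Type := MvPowerSeries (Fin d) (JetPoly R d)

variable {R d}

section Taylor

variable {K : Type} [Field K] [Algebra K R]
  (b : Module.Basis (Fin d) R (KaehlerDifferential K R))

variable (R) in
noncomputable def genericSeries (a : Fin d) : JetSeries R d :=
  fun i => if h : 1 ≤ deg i then MvPolynomial.X ⟨(a, i), h⟩ else 0

theorem coeff_genericSeries (a : Fin d) (i : MIdx d) :
    coeff i (genericSeries R a) = if h : 1 ≤ deg i then MvPolynomial.X ⟨(a, i), h⟩ else 0 :=
  rfl

theorem one_le_order_genericSeries (a : Fin d) : 1 ≤ (genericSeries R a).order :=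
  nat_le_order fun i hi => by rw [coeff_genericSeries, dif_neg (by rw [deg_eq_degree]; omega)]

noncomputable def coeffDerivation (a : Fin d) : Derivation K (JetSeries R d) (JetSeries R d) :=
  (coordDerivation b a).mvPolynomialMapCoeffs.mvPowerSeriesMapCoeffs

theorem coeff_coeffDerivation (a : Fin d) (u : JetSeries R d) (i : MIdx d) (m : JetVar d →₀ ℕ) :
    (coeff i (coeffDerivation b a u)).coeff m = coordDerivation b a ((coeff i u).coeff m) :=
  rfl

theorem order_le_order_coeffDerivation (a : Fin d) (u : JetSeries R d) :
    u.order ≤ (coeffDerivation b a u).order :=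
  le_order fun i hi => by
    ext m
    rw [coeff_coeffDerivation, coeff_of_lt_order hi, MvPolynomial.coeff_zero, map_zero]

theorem coeffDerivation_algebraMap (a : Fin d) (f : R) :
    coeffDerivation b a (algebraMap R (JetSeries R d) f) =
      algebraMap R (JetSeries R d) (coordDerivation b a f) := by
  classical
  ext i m
  simp only [coeff_coeffDerivation, MvPowerSeries.algebraMap_apply, coeff_C,
    MvPolynomial.algebraMap_eq]
  split_ifs
  · rw [MvPolynomial.coeff_C, MvPolynomial.coeff_C]
    split_ifs
    exacts [rfl, map_zero _]
  · simp

theorem coeffDerivation_genericSeries (a c : Fin d) :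
    coeffDerivation b a (genericSeries R c) = 0 := by
  classical
  ext i m
  simp only [coeff_coeffDerivation, coeff_genericSeries, map_zero, MvPolynomial.coeff_zero]
  split_ifs <;> simp [MvPolynomial.coeff_X, apply_ite]

noncomputable def taylorDerivation : Derivation K (JetSeries R d) (JetSeries R d) :=
  ∑ a, genericSeries R a • coeffDerivation b a

theorem taylorDerivation_apply (u : JetSeries R d) :
    taylorDerivation b u = ∑ a, genericSeries R a * coeffDerivation b a u := by
  rw [taylorDerivation, ← Derivation.coeFnAddMonoidHom_apply, map_sum, Finset.sum_apply]
  rfl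

theorem order_add_one_le_order_taylorDerivation (u : JetSeries R d) :
    u.order + 1 ≤ (taylorDerivation b u).order := by
  rw [taylorDerivation_apply, add_comm]
  exact le_order_sum _ _ fun a _ => (add_le_add (one_le_order_genericSeries a)
    (order_le_order_coeffDerivation b a u)).trans le_order_mul

theorem natCast_le_order_iterate_taylorDerivation (n : ℕ) (u : JetSeries R d) :
    (n : ℕ∞) ≤ ((taylorDerivation b)^[n] u).order := by
  induction n with
  | zero => simp
  | succ n ih =>
    rw [Function.iterate_succ_apply', Nat.cast_succ]
    exact (add_le_add ih le_rfl).trans (order_add_one_le_order_taylorDerivation b _)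

theorem coeff_iterate_taylorDerivation_of_lt {n : ℕ} (u : JetSeries R d) {i : MIdx d}
    (hi : deg i < n) : coeff i ((taylorDerivation b)^[n] u) = 0 :=
  coeff_of_lt_order ((Nat.cast_lt.2 hi).trans_le (natCast_le_order_iterate_taylorDerivation b n u))

theorem taylorDerivation_algebraMap_of_basis (x : Fin d → R)
    (hb : ∀ a, b a = KaehlerDifferential.D K R (x a)) (c : Fin d) :
    taylorDerivation b (algebraMap R (JetSeries R d) (x c)) = genericSeries R c := by
  classical
  simp only [taylorDerivation_apply, coeffDerivation_algebraMap,
    coordDerivation_apply_of_basis x b hb, Finsupp.single_apply]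
  simp

theorem taylorDerivation_genericSeries (c : Fin d) :
    taylorDerivation b (genericSeries R c) = 0 := by
  simp [taylorDerivation_apply, coeffDerivation_genericSeries]

theorem taylorDerivation_algebraMap_algebraMap (c : K) :
    taylorDerivation b (algebraMap R (JetSeries R d) (algebraMap K R c)) = 0 := by
  rw [← IsScalarTower.algebraMap_apply, Derivation.map_algebraMap]

theorem coeff_algebraMap_of_ne_zero (f : R) {i : MIdx d} (hi : i ≠ 0) :
    coeff i (algebraMap R (JetSeries R d) f) = 0 := by
  classical
  rw [MvPowerSeries.algebraMap_apply, coeff_C, if_neg hi]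

/-- `exp(𝔇) f`: since `𝔇` raises the order, only `n ≤ |i|` contribute to the coefficient of `tⁱ`. -/
noncomputable def taylor (f : R) : JetSeries R d :=
  fun i => ∑ n ∈ range (deg i + 1),
    (n.factorial : K)⁻¹ • coeff i ((taylorDerivation b)^[n] (algebraMap R (JetSeries R d) f))

theorem coeff_taylor_of_lt (f : R) {i : MIdx d} {N : ℕ} (hN : deg i < N) :
    coeff i (taylor b f) = ∑ n ∈ range N,
      (n.factorial : K)⁻¹ • coeff i ((taylorDerivation b)^[n] (algebraMap R (JetSeries R d) f)) :=
  sum_subset (range_subset_range.2 hN) fun n _ hn => by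
    rw [coeff_iterate_taylorDerivation_of_lt b _ (by simp only [mem_range] at hn; omega),
      smul_zero]

theorem coeff_zero_taylor (f : R) : coeff 0 (taylor b f) = MvPolynomial.C f := by
  classical
  rw [coeff_taylor_of_lt b f (N := 1) (by simp [deg_eq_degree]), sum_range_one]
  simp [MvPowerSeries.algebraMap_apply]

theorem coeff_taylor_of_basis (x : Fin d → R) (hb : ∀ a, b a = KaehlerDifferential.D K R (x a))
    (a : Fin d) {i : MIdx d} (hi : 1 ≤ deg i) :
    coeff i (taylor b (x a)) = MvPolynomial.X ⟨(a, i), hi⟩ := by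
  rw [coeff_taylor_of_lt b _ (Nat.lt_succ_self _), sum_eq_single_of_mem 1 (by simp; omega)]
  · simp [taylorDerivation_algebraMap_of_basis b x hb, coeff_genericSeries, hi]
  · intro n _ hn1
    obtain rfl | h2 : n = 0 ∨ 2 ≤ n := by omega
    · simp [coeff_algebraMap_of_ne_zero _ (one_le_deg_iff.1 hi)]
    · obtain ⟨m, rfl⟩ := Nat.exists_eq_add_of_le' h2
      rw [Function.iterate_add_apply, Function.iterate_succ_apply, Function.iterate_one,
        taylorDerivation_algebraMap_of_basis b x hb, taylorDerivation_genericSeries,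
        iterate_map_zero, map_zero, smul_zero]

theorem coeff_taylor_algebraMap (c : K) {i : MIdx d} (hi : 1 ≤ deg i) :
    coeff i (taylor b (algebraMap K R c)) = 0 := by
  rw [coeff_taylor_of_lt b _ (Nat.lt_succ_self _)]
  refine sum_eq_zero fun n _ => ?_
  rcases n with _ | n
  · simp [coeff_algebraMap_of_ne_zero _ (one_le_deg_iff.1 hi)]
  · rw [Function.iterate_succ_apply, taylorDerivation_algebraMap_algebraMap, iterate_map_zero,
      map_zero, smul_zero]

theorem taylor_add (f g : R) : taylor b (f + g) = taylor b f + taylor b g := by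
  ext i : 1
  simp only [map_add, coeff_taylor_of_lt b _ (Nat.lt_succ_self (deg i)), iterate_map_add,
    smul_add, sum_add_distrib]

theorem taylor_mul [CharZero K] (f g : R) : taylor b (f * g) = taylor b f * taylor b g := by
  classical
  let e (f : R) (n : ℕ) : JetSeries R d :=
    (n.factorial : K)⁻¹ • (taylorDerivation b)^[n] (algebraMap R (JetSeries R d) f)
  ext i : 1
  set N := deg i + 1
  have htrunc (f : R) (j : MIdx d) (hj : deg j < N) :
      coeff j (taylor b f) = coeff j (∑ n ∈ range N, e f n) := by
    simp only [coeff_taylor_of_lt b f hj, map_sum, e, LinearMap.map_smul_of_tower]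
  have hvanish (j k : ℕ) (hjk : N ≤ j + k) : coeff i (e f j * e g k) = 0 := by
    rw [smul_mul_smul_comm, LinearMap.map_smul_of_tower, coeff_of_lt_order, smul_zero]
    refine lt_of_lt_of_le ?_ ((add_le_add (natCast_le_order_iterate_taylorDerivation b j _)
      (natCast_le_order_iterate_taylorDerivation b k _)).trans le_order_mul)
    exact_mod_cast (show deg i < j + k by omega)
  calc coeff i (taylor b (f * g))
      = ∑ n ∈ range N, ∑ p ∈ antidiagonal n, coeff i (e f p.1 * e g p.2) := by
        simp only [coeff_taylor_of_lt b _ (by omega : deg i < N), map_mul,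
          ← LinearMap.map_smul_of_tower, Derivation.inv_factorial_smul_iterate_apply_mul,
          map_sum, e]
    _ = ∑ j ∈ range N, ∑ k ∈ range N, coeff i (e f j * e g k) :=
        sum_range_sum_antidiagonal_eq_sum_range_sum_range N _ hvanish
    _ = coeff i ((∑ j ∈ range N, e f j) * ∑ k ∈ range N, e g k) := by
        simp only [sum_mul_sum, map_sum]
    _ = coeff i (taylor b f * taylor b g) := by
        rw [coeff_mul, coeff_mul]
        refine sum_congr rfl fun p hp => ?_
        have hdeg : deg p.1 + deg p.2 = deg i := by rw [← deg_add, mem_antidiagonal.1 hp]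
        rw [htrunc f p.1 (by omega), htrunc g p.2 (by omega)]

end Taylor



section Quotient

variable {K R : Type} [Field K] [CommRing R] [Algebra K R] {d : ℕ}

instance : IsScalarTower K R (Rd K R d) := Ideal.Quotient.isScalarTower K R _

theorem mk_eq_zero_of_mem_relSet {p : MvPolynomial (R × MIdx d) R} (hp : p ∈ relSet K R d) :
    Ideal.Quotient.mk (Ideal.span (relSet K R d)) p = 0 :=
  Ideal.Quotient.eq_zero_iff_mem.2 (Ideal.subset_span hp)

theorem gen_add (f g : R) (i : MIdx d) : gen K R (f + g) i = gen K R f i + gen K R g i := by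
  have h := mk_eq_zero_of_mem_relSet (K := K) (Or.inl ⟨f, g, i, rfl⟩)
  rwa [map_sub, map_sub, sub_sub, sub_eq_zero] at h

theorem gen_mul (f g : R) (i : MIdx d) :
    gen K R (f * g) i = ∑ p ∈ antidiagonal i, gen K R f p.1 * gen K R g p.2 := by
  have h := mk_eq_zero_of_mem_relSet (K := K) (Or.inr (Or.inl ⟨f, g, i, rfl⟩))
  rw [map_sub, sub_eq_zero, map_sum] at h
  simp only [map_mul] at h
  exact h

theorem gen_zero (f : R) : gen K R f (0 : MIdx d) = algebraMap R (Rd K R d) f := by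
  have h := mk_eq_zero_of_mem_relSet (K := K) (d := d) (Or.inr (Or.inr (Or.inl ⟨f, rfl⟩)))
  rwa [map_sub, sub_eq_zero] at h

theorem gen_algebraMap (c : K) {i : MIdx d} (hi : 1 ≤ deg i) : gen K R (algebraMap K R c) i = 0 :=
  mk_eq_zero_of_mem_relSet (Or.inr (Or.inr (Or.inr ⟨c, i, hi, rfl⟩)))

variable (K) in
noncomputable def jetEval (x : Fin d → R) : JetPoly R d →ₐ[R] Rd K R d :=
  MvPolynomial.aeval fun v => gen K R (x v.1.1) v.1.2

theorem jetEval_C (x : Fin d → R) (f : R) :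
    jetEval K x (MvPolynomial.C f) = algebraMap R (Rd K R d) f :=
  MvPolynomial.aeval_C _ f

theorem jetEval_X (x : Fin d → R) (v : JetVar d) :
    jetEval K x (MvPolynomial.X v) = gen K R (x v.1.1) v.1.2 :=
  MvPolynomial.aeval_X _ v

variable (b : Module.Basis (Fin d) R (KaehlerDifferential K R)) (x : Fin d → R)

noncomputable def genDefect (i : MIdx d) (f : R) : Rd K R d :=
  gen K R f i - jetEval K x (coeff i (taylor b f))

theorem genDefect_add (i : MIdx d) (f g : R) :
    genDefect b x i (f + g) = genDefect b x i f + genDefect b x i g := by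
  simp only [genDefect, gen_add, taylor_add, map_add]
  abel

theorem genDefect_zero (f : R) : genDefect b x 0 f = 0 := by
  rw [genDefect, gen_zero, coeff_zero_taylor, jetEval_C, sub_self]

theorem genDefect_algebraMap (c : K) {i : MIdx d} (hi : i ≠ 0) :
    genDefect b x i (algebraMap K R c) = 0 := by
  rw [genDefect, gen_algebraMap c (one_le_deg_iff.2 hi),
    coeff_taylor_algebraMap b c (one_le_deg_iff.2 hi), map_zero, sub_zero]

theorem genDefect_of_basis (hb : ∀ a, b a = KaehlerDifferential.D K R (x a)) (a : Fin d)
    {i : MIdx d} (hi : i ≠ 0) : genDefect b x i (x a) = 0 := by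
  rw [genDefect, coeff_taylor_of_basis b x hb a (one_le_deg_iff.2 hi), jetEval_X, sub_self]

variable [CharZero K]

theorem aeval_coeff_taylor_eq_zero_of_mem_relSet {p : MvPolynomial (R × MIdx d) R}
    (hp : p ∈ relSet K R d) : MvPolynomial.aeval (fun v => coeff v.2 (taylor b v.1)) p = 0 := by
  rcases hp with ⟨f, g, i, rfl⟩ | ⟨f, g, i, rfl⟩ | ⟨f, rfl⟩ | ⟨c, i, hi, rfl⟩
  · simp [taylor_add]
  · simp [taylor_mul, coeff_mul]
  · simp [coeff_zero_taylor]
  · simp [coeff_taylor_algebraMap b c hi]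

noncomputable def taylorCoeffHom : Rd K R d →ₐ[R] JetPoly R d :=
  Ideal.Quotient.liftₐ _ (MvPolynomial.aeval fun v => coeff v.2 (taylor b v.1)) fun _ hp =>
    (Ideal.span_le (I := RingHom.ker _).2
      (fun _ hq => aeval_coeff_taylor_eq_zero_of_mem_relSet b hq) hp)

theorem taylorCoeffHom_gen (f : R) (i : MIdx d) :
    taylorCoeffHom b (gen K R f i) = coeff i (taylor b f) :=
  MvPolynomial.aeval_X _ (f, i)

theorem taylorCoeffHom_comp_jetEval (hb : ∀ a, b a = KaehlerDifferential.D K R (x a)) :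
    (taylorCoeffHom b).comp (jetEval K x) = AlgHom.id R (JetPoly R d) :=
  MvPolynomial.algHom_ext fun v => by
    rw [AlgHom.comp_apply, jetEval_X, taylorCoeffHom_gen, coeff_taylor_of_basis b x hb v.1.1 v.2,
      AlgHom.id_apply]

/-- Below degree `|i|` the two product rules agree term by term, so only the extreme terms
`(0, i)` and `(i, 0)` survive in the difference. -/
theorem genDefect_mul {i : MIdx d} (hi : i ≠ 0)
    (hlow : ∀ j, deg j < deg i → ∀ f, genDefect b x j f = 0) (f g : R) :
    genDefect b x i (f * g) = f • genDefect b x i g + g • genDefect b x i f := by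
  have hagree : ∀ p ∈ antidiagonal i, p.1 ≠ 0 → p.2 ≠ 0 →
      gen K R f p.1 * gen K R g p.2 =
        jetEval K x (coeff p.1 (taylor b f)) * jetEval K x (coeff p.2 (taylor b g)) := by
    intro p hp h1 h2
    have hdeg : deg p.1 + deg p.2 = deg i := by rw [← deg_add, mem_antidiagonal.1 hp]
    have h1' := one_le_deg_iff.2 h1
    have h2' := one_le_deg_iff.2 h2
    rw [sub_eq_zero.1 (hlow p.1 (by omega) f), sub_eq_zero.1 (hlow p.2 (by omega) g)]
  rw [genDefect, gen_mul, taylor_mul, coeff_mul, map_sum]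
  simp only [map_mul]
  refine (sum_antidiagonal_sub_sum_antidiagonal hi (fun p q => gen K R f p * gen K R g q)
    (fun p q => jetEval K x (coeff p (taylor b f)) * jetEval K x (coeff q (taylor b g)))
    hagree).trans ?_
  rw [genDefect, genDefect, gen_zero, gen_zero, coeff_zero_taylor, coeff_zero_taylor, jetEval_C,
    jetEval_C, Algebra.smul_def, Algebra.smul_def]
  ring

theorem genDefect_eq_zero (hb : ∀ a, b a = KaehlerDifferential.D K R (x a)) (i : MIdx d) :
    genDefect b x i = 0 := by
  induction hn : deg i using Nat.strong_induction_on generalizing i with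
  | _ n ih =>
  subst hn
  obtain rfl | hi := eq_or_ne i 0
  · exact funext (genDefect_zero b x)
  have hlow (j : MIdx d) (hj : deg j < deg i) (f : R) : genDefect b x j f = 0 := by
    rw [ih _ hj j rfl, Pi.zero_apply]
  funext f
  exact DFunLike.congr_fun ((AddMonoidHom.mk' _ (genDefect_add b x i)).eq_zero_of_leibniz_of_basis
    x b hb (genDefect_algebraMap b x · hi) (genDefect_mul b x hi hlow)
    (genDefect_of_basis b x hb · hi)) f

theorem jetEval_comp_taylorCoeffHom (hb : ∀ a, b a = KaehlerDifferential.D K R (x a)) :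
    (jetEval K x).comp (taylorCoeffHom b) = AlgHom.id R (Rd K R d) :=
  Ideal.Quotient.algHom_ext R <| MvPolynomial.algHom_ext fun v =>
    (congrArg (jetEval K x) (taylorCoeffHom_gen b v.1 v.2)).trans
      (sub_eq_zero.1 (congrFun (genDefect_eq_zero b x hb v.2) v.1)).symm

end Quotient

end Paper

theorem statement1_general (K R : Type) [Field K] [CharZero K] [CommRing R] [Algebra K R]
    (d : ℕ) (x : Fin d → R)
    (b : Module.Basis (Fin d) R (KaehlerDifferential K R))
    (hb : ∀ a : Fin d, b a = KaehlerDifferential.D K R (x a)) :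
    Function.Bijective
      (MvPolynomial.aeval
        (fun v : {p : Fin d × Paper.MIdx d // 1 ≤ Paper.deg p.2} =>
          Paper.gen K R (x v.1.1) v.1.2) :
        MvPolynomial {p : Fin d × Paper.MIdx d // 1 ≤ Paper.deg p.2} R →ₐ[R] Paper.Rd K R d) :=
  (AlgEquiv.ofAlgHom (Paper.jetEval K x) (Paper.taylorCoeffHom b)
    (Paper.jetEval_comp_taylorCoeffHom b x hb) (Paper.taylorCoeffHom_comp_jetEval b x hb)).bijective

/-- If `Ω¹_{R/K}` is free with basis `dx¹,…,dxᵈ`, then the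
`R`-algebra homomorphism from the polynomial `R`-algebra on variables `X^a_i`
(`1 ≤ a ≤ d`, `|i| ≥ 1`) to `R^𝐝` sending `X^a_i` to `(x^a)_i` is bijective. -/
theorem statement1 (K R : Type) [Field K] [CharZero K] [CommRing R] [Algebra K R]
    (d : ℕ) (hd : 1 ≤ d) (x : Fin d → R)
    (b : Module.Basis (Fin d) R (KaehlerDifferential K R))
    (hb : ∀ a : Fin d, b a = KaehlerDifferential.D K R (x a)) :
    Function.Bijective
      (MvPolynomial.aeval
        (fun v : {p : Fin d × Paper.MIdx d // 1 ≤ Paper.deg p.2} =>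
          Paper.gen K R (x v.1.1) v.1.2) :
        MvPolynomial {p : Fin d × Paper.MIdx d // 1 ≤ Paper.deg p.2} R →ₐ[R] Paper.Rd K R d) :=
  statement1_general K R d x b hb
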